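/- arXiv:2501.08905 — 3 statements merged into one kernel-verified Lean document; each statement's English description precedes it below -/
import Mathlib

section
/- Let Z = {z_1, ..., z_k} be an inclusion-wise minimal generating set of a group G. Then the map from subsets S ⊆ {1,...,k} to G sending S to the product ∏_{i∈S} z_i (in increasing index order) is injective. -/
/-!
Order the index set and compare two subsets `S ≠ T` with equal ordered products at the least
index `m` of `S ∪ T`. If `m` lies in both, cancel `z m` on the left and recurse on a smaller
union. If `m` lies in `S` only, then `z m = (∏ T) (∏ (S \ {m}))⁻¹`, a word in the other
generators, so dropping `z m` from the generating set would not shrink the generated group,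
contradicting minimality.
-/

open Finset

section

variable {ι G : Type*} [LinearOrder ι]

def orderedProd [Monoid G] (z : ι → G) (s : Finset ι) : G :=
  ((s.sort (· ≤ ·)).map z).prod

theorem orderedProd_eq_mul_erase [Monoid G] (z : ι → G) {s : Finset ι} {a : ι} (ha : a ∈ s)
    (hle : ∀ b ∈ s, a ≤ b) : orderedProd z s = z a * orderedProd z (s.erase a) := by
  conv_lhs => rw [← insert_erase ha]
  rw [orderedProd, sort_insert _ (fun b hb => hle b (mem_of_mem_erase hb)) (notMem_erase a s)]
  rfl

theorem orderedProd_mem_closure [Group G] (z : ι → G) (s : Finset ι) :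
    orderedProd z s ∈ Subgroup.closure (z '' s) := by
  refine list_prod_mem fun x hx => ?_
  obtain ⟨i, hi, rfl⟩ := List.mem_map.mp hx
  exact Subgroup.subset_closure ⟨i, (mem_sort _).mp hi, rfl⟩

theorem orderedProd_mem_closure_range_diff [Group G] {z : ι → G} (hinj : Function.Injective z)
    {s : Finset ι} {a : ι} (ha : a ∉ s) :
    orderedProd z s ∈ Subgroup.closure (Set.range z \ {z a}) := by
  refine Subgroup.closure_mono ?_ (orderedProd_mem_closure z s)
  rintro _ ⟨i, hi, rfl⟩
  exact ⟨Set.mem_range_self i, fun h => ha (hinj h ▸ hi)⟩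

theorem Subgroup.closure_diff_singleton_eq_closure [Group G] {s : Set G} {x : G}
    (hx : x ∈ Subgroup.closure (s \ {x})) : Subgroup.closure (s \ {x}) = Subgroup.closure s := by
  refine le_antisymm (Subgroup.closure_mono Set.sdiff_subset) (Subgroup.closure_le _ |>.mpr ?_)
  intro y hy
  by_cases hyx : y = x
  · exact hyx ▸ hx
  · exact Subgroup.subset_closure ⟨hy, hyx⟩

theorem apply_mem_closure_of_orderedProd_eq [Group G] {z : ι → G} (hinj : Function.Injective z)
    {s t : Finset ι} {a : ι} (has : a ∈ s) (hat : a ∉ t) (hle : ∀ b ∈ s, a ≤ b)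
    (h : orderedProd z s = orderedProd z t) : z a ∈ Subgroup.closure (Set.range z \ {z a}) := by
  rw [orderedProd_eq_mul_erase z has hle] at h
  have hmem := mul_mem (orderedProd_mem_closure_range_diff (a := a) hinj hat)
    (inv_mem (orderedProd_mem_closure_range_diff hinj (notMem_erase a s)))
  rwa [← eq_mul_inv_of_mul_eq h] at hmem

theorem orderedProd_injective [Group G] {z : ι → G} (hinj : Function.Injective z)
    (hind : ∀ i, z i ∉ Subgroup.closure (Set.range z \ {z i})) :
    Function.Injective (orderedProd z) := by
  suffices key : ∀ u : Finset ι, ∀ s t, s ∪ t = u → orderedProd z s = orderedProd z t → s = t from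
    fun s t h => key _ s t rfl h
  intro u
  induction u using Finset.strongInduction with
  | H u ih =>
  intro s t hu hst
  rcases u.eq_empty_or_nonempty with rfl | hne
  · obtain ⟨rfl, rfl⟩ := union_eq_empty.mp hu
    rfl
  set m := u.min' hne
  have hmu : m ∈ s ∪ t := hu ▸ u.min'_mem hne
  have hle : ∀ b ∈ s ∪ t, m ≤ b := fun b hb => u.min'_le b (hu ▸ hb)
  by_cases hms : m ∈ s <;> by_cases hmt : m ∈ t
  · rw [orderedProd_eq_mul_erase z hms fun b hb => hle b (mem_union_left t hb),
      orderedProd_eq_mul_erase z hmt fun b hb => hle b (mem_union_right s hb)] at hst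
    have herase : s.erase m = t.erase m :=
      ih (u.erase m) (erase_ssubset (u.min'_mem hne)) _ _ (by rw [← hu, erase_union_distrib])
        (mul_left_cancel hst)
    rw [← insert_erase hms, ← insert_erase hmt, herase]
  · exact absurd (apply_mem_closure_of_orderedProd_eq hinj hms hmt
      (fun b hb => hle b (mem_union_left t hb)) hst) (hind m)
  · exact absurd (apply_mem_closure_of_orderedProd_eq hinj hmt hms
      (fun b hb => hle b (mem_union_right s hb)) hst.symm) (hind m)
  · exact ((mem_union.mp hmu).elim hms hmt).elim

end

/-- Let `Z = {z 1, ..., z k}` be an inclusion-wise minimal generating set of a group `G`. Then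
the map sending a subset `S ⊆ {1,...,k}` to the product `∏_{i ∈ S} z i` (taken in increasing
index order) is injective. -/
theorem stmt_1 {G : Type*} [Group G] {k : ℕ} (z : Fin k → G)
    (hinj : Function.Injective z)
    (hgen : Subgroup.closure (Set.range z) = ⊤)
    (hmin : ∀ i : Fin k, Subgroup.closure (Set.range z \ {z i}) ≠ ⊤) :
    Function.Injective (fun S : Finset (Fin k) => ((S.sort (· ≤ ·)).map z).prod) :=
  orderedProd_injective hinj fun i hi =>
    hmin i ((Subgroup.closure_diff_singleton_eq_closure hi).trans hgen)
end

section
/- Let Γ = (N, (A^i), (u^i)) be a finite game and construct the labeled graph G with vertex set N ⊔ (⊔_i A^i) ⊔ A (where A = ∏_i A^i), edges {i,a} labeled λ for a ∈ A^i, edges {a, 𝐚} labeled λ' for a a coordinate of profile 𝐚, and edges {i, 𝐚} labeled u^i(𝐚), where λ ≠ λ' are values not occurring as payoffs. Then the map M sending a game symmetry φ of Γ to the vertex map ψ (ψ(i) = π(i), ψ(a) = φ(a), ψ(𝐚) = φ(𝐚)) is a bijection between the symmetry group of Γ and the automorphism group of G. -/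
/-- A game symmetry of the game with players `N`, action sets `A i`, and payoffs `u`: a
bijection `e` of the disjoint union of action sets inducing a player permutation `π` (actions
of a player are mapped to actions of the same image player), together with the induced
bijection `Φ` on action profiles, preserving payoffs. -/
structure GameSym (N : Type*) (A : N → Type*) (u : (i : N) → ((j : N) → A j) → ℝ) where
  π : Equiv.Perm N
  e : (Σ i, A i) ≃ (Σ i, A i)
  Φ : ((j : N) → A j) ≃ ((j : N) → A j)
  part : ∀ x : Σ i, A i, (e x).1 = π x.1
  compat : ∀ (a : (j : N) → A j) (i : N), e ⟨i, a i⟩ = ⟨π i, Φ a (π i)⟩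
  payoff : ∀ (i : N) (a : (j : N) → A j), u i a = u (π i) (Φ a)

/-- Vertex set of the labeled graph associated to a game: a player node for each player, an
action node for each action of each player, and a profile node for each action profile. -/
abbrev GameVertex (N : Type*) (A : N → Type*) : Type _ :=
  N ⊕ (Σ i, A i) ⊕ ((j : N) → A j)

/-- The edge-labeling of the graph associated to a game: `{i, a}` has label `lam` for each
action `a` of player `i`; `{a, 𝐚}` has label `lam'` whenever the action `a` is a coordinate of
the profile `𝐚`; `{i, 𝐚}` has label `u i 𝐚` for each player `i` and profile `𝐚`; all other
pairs are non-edges (`none`). -/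
def gameGraphLabel {N : Type*} [DecidableEq N] {A : N → Type*} [∀ i, DecidableEq (A i)]
    (u : (i : N) → ((j : N) → A j) → ℝ) (lam lam' : ℝ) :
    GameVertex N A → GameVertex N A → Option ℝ
  | Sum.inl i, Sum.inr (Sum.inl x) => if x.1 = i then some lam else none
  | Sum.inr (Sum.inl x), Sum.inl i => if x.1 = i then some lam else none
  | Sum.inr (Sum.inl x), Sum.inr (Sum.inr a) => if a x.1 = x.2 then some lam' else none
  | Sum.inr (Sum.inr a), Sum.inr (Sum.inl x) => if a x.1 = x.2 then some lam' else none
  | Sum.inl i, Sum.inr (Sum.inr a) => some (u i a)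
  | Sum.inr (Sum.inr a), Sum.inl i => some (u i a)
  | _, _ => none

/-!
A game symmetry acts on the three kinds of vertices and visibly preserves all labels, and it is
determined by that action. Conversely, an automorphism preserves, for each vertex, the set of
labels on its incident edges. Players carry `lam` but never `lam'`, actions carry both, and
profiles never carry `lam`, as `lam` and `lam'` are distinct non-payoffs. Hence an automorphism
permutes players, actions and profiles separately (a permutation of a finite sum that preserves
one summand is a sum of permutations), and the preservation of the three kinds of edge labels
is exactly the three axioms of a game symmetry.
-/

namespace GameSym

variable {N : Type*} {A : N → Type*} {u : (i : N) → ((j : N) → A j) → ℝ}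

lemma ext {s t : GameSym N A u} (hπ : s.π = t.π) (he : s.e = t.e) (hΦ : s.Φ = t.Φ) : s = t := by
  cases s; cases t; cases hπ; cases he; cases hΦ; rfl

def toPerm (s : GameSym N A u) : Equiv.Perm (GameVertex N A) :=
  Equiv.sumCongr s.π (Equiv.sumCongr s.e s.Φ)

lemma toPerm_injective : Function.Injective (toPerm : GameSym N A u → _) := by
  intro s t h
  obtain ⟨hπ, heΦ⟩ := Prod.mk.inj <|
    Equiv.Perm.sumCongrHom_injective (a₁ := (s.π, _)) (a₂ := (t.π, _)) h
  obtain ⟨he, hΦ⟩ := Prod.mk.inj <|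
    Equiv.Perm.sumCongrHom_injective (a₁ := (s.e, s.Φ)) (a₂ := (t.e, t.Φ)) heΦ
  exact ext hπ he hΦ

lemma Φ_apply_e_fst_eq_iff [DecidableEq N] (s : GameSym N A u) (a : (j : N) → A j)
    (x : Σ i, A i) : s.Φ a (s.e x).1 = (s.e x).2 ↔ a x.1 = x.2 := by
  obtain ⟨i, b⟩ := x
  -- `e ⟨i, b⟩` is computed from the profile that agrees with `a` except that `i` plays `b`.
  have hb := s.compat (Function.update a i b) i
  rw [Function.update_self] at hb
  rw [hb]
  dsimp only
  constructor
  · intro h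
    have h' : s.e ⟨i, a i⟩ = s.e ⟨i, b⟩ := by rw [s.compat a i, hb, h]
    simpa using s.e.injective h'
  · rintro rfl
    rw [Function.update_eq_self]

lemma gameGraphLabel_toPerm [DecidableEq N] [∀ i, DecidableEq (A i)] (lam lam' : ℝ)
    (s : GameSym N A u) (v w : GameVertex N A) :
    gameGraphLabel u lam lam' (s.toPerm v) (s.toPerm w) = gameGraphLabel u lam lam' v w := by
  rcases v with i | x | a <;> rcases w with j | y | b <;>
    simp only [toPerm, Equiv.sumCongr_apply, Sum.map_inl, Sum.map_inr, gameGraphLabel]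
  · simp [s.part, s.π.injective.eq_iff]
  · rw [← s.payoff]
  · simp [s.part, s.π.injective.eq_iff]
  · simp [s.Φ_apply_e_fst_eq_iff]
  · rw [← s.payoff]
  · simp [s.Φ_apply_e_fst_eq_iff]

end GameSym

section Automorphisms

variable {N : Type*} [DecidableEq N] {A : N → Type*} [∀ i, DecidableEq (A i)]
  (u : (i : N) → ((j : N) → A j) → ℝ) (lam lam' : ℝ)

def HasIncidentLabel (v : GameVertex N A) (c : ℝ) : Prop :=
  ∃ w, gameGraphLabel u lam lam' v w = some c

lemma hasIncidentLabel_inl_lam (i : N) [Nonempty (A i)] :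
    HasIncidentLabel u lam lam' (Sum.inl i) lam :=
  ⟨Sum.inr (Sum.inl ⟨i, Classical.arbitrary (A i)⟩), by simp [gameGraphLabel]⟩

lemma hasIncidentLabel_inr_inl_lam (x : Σ i, A i) :
    HasIncidentLabel u lam lam' (Sum.inr (Sum.inl x)) lam :=
  ⟨Sum.inl x.1, by simp [gameGraphLabel]⟩

lemma hasIncidentLabel_inr_inl_lam' [∀ i, Nonempty (A i)] (x : Σ i, A i) :
    HasIncidentLabel u lam lam' (Sum.inr (Sum.inl x)) lam' :=
  ⟨Sum.inr (Sum.inr (Function.update (fun j => Classical.arbitrary (A j)) x.1 x.2)),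
    by simp [gameGraphLabel]⟩

variable {u lam lam'}

lemma not_hasIncidentLabel_inl_lam' (hll : lam ≠ lam') (hlam' : ∀ i a, u i a ≠ lam') (i : N) :
    ¬ HasIncidentLabel u lam lam' (Sum.inl i) lam' := by
  rintro ⟨j | x | a, h⟩ <;> simp_all [gameGraphLabel]

lemma not_hasIncidentLabel_inr_inr_lam (hll : lam ≠ lam') (hlam : ∀ i a, u i a ≠ lam)
    (a : (j : N) → A j) : ¬ HasIncidentLabel u lam lam' (Sum.inr (Sum.inr a)) lam := by
  rintro ⟨j | x | b, h⟩ <;> simp_all [gameGraphLabel, eq_comm]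

variable {ψ : Equiv.Perm (GameVertex N A)}
  (hψ : ∀ v w, gameGraphLabel u lam lam' (ψ v) (ψ w) = gameGraphLabel u lam lam' v w)
include hψ

lemma hasIncidentLabel_apply_iff (v : GameVertex N A) (c : ℝ) :
    HasIncidentLabel u lam lam' (ψ v) c ↔ HasIncidentLabel u lam lam' v c :=
  ⟨fun ⟨w, h⟩ => ⟨ψ.symm w, by rwa [← hψ, ψ.apply_symm_apply]⟩,
    fun ⟨w, h⟩ => ⟨ψ w, (hψ v w).trans h⟩⟩

lemma mapsTo_range_inl_of_preserves [∀ i, Nonempty (A i)] (hll : lam ≠ lam')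
    (hlam : ∀ i a, u i a ≠ lam) (hlam' : ∀ i a, u i a ≠ lam') :
    Set.MapsTo ψ (Set.range Sum.inl) (Set.range Sum.inl) := by
  rintro _ ⟨i, rfl⟩
  have hl := (hasIncidentLabel_apply_iff hψ _ _).2 (hasIncidentLabel_inl_lam u lam lam' i)
  have hl' := mt (hasIncidentLabel_apply_iff hψ _ _).1 (not_hasIncidentLabel_inl_lam' hll hlam' i)
  rcases h : ψ (Sum.inl i) with j | x | a
  · exact ⟨j, rfl⟩
  · exact absurd (h ▸ hasIncidentLabel_inr_inl_lam' u lam lam' x) (h ▸ hl')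
  · exact absurd (h ▸ hl) (not_hasIncidentLabel_inr_inr_lam hll hlam a)

lemma mapsTo_range_inl_of_sumCongr {π : Equiv.Perm N}
    {τ : Equiv.Perm ((Σ i, A i) ⊕ ((j : N) → A j))} (hψτ : ψ = Equiv.sumCongr π τ)
    (hll : lam ≠ lam') (hlam : ∀ i a, u i a ≠ lam) :
    Set.MapsTo τ (Set.range Sum.inl) (Set.range Sum.inl) := by
  rintro _ ⟨x, rfl⟩
  have hl := (hasIncidentLabel_apply_iff hψ _ _).2 (hasIncidentLabel_inr_inl_lam u lam lam' x)
  rw [hψτ, Equiv.sumCongr_apply, Sum.map_inr] at hl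
  rcases h : τ (Sum.inl x) with y | a
  · exact ⟨y, rfl⟩
  · exact absurd (h ▸ hl) (not_hasIncidentLabel_inr_inr_lam hll hlam a)

lemma exists_sumCongr_eq_of_preserves [Finite N] [∀ i, Finite (A i)] [∀ i, Nonempty (A i)]
    (hll : lam ≠ lam') (hlam : ∀ i a, u i a ≠ lam) (hlam' : ∀ i a, u i a ≠ lam') :
    ∃ (π : Equiv.Perm N) (e : Equiv.Perm (Σ i, A i)) (Φ : Equiv.Perm ((j : N) → A j)),
      Equiv.sumCongr π (Equiv.sumCongr e Φ) = ψ := by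
  obtain ⟨⟨π, τ⟩, hψτ⟩ := Equiv.Perm.mem_sumCongrHom_range_of_perm_mapsTo_inl
    (mapsTo_range_inl_of_preserves hψ hll hlam hlam')
  obtain ⟨⟨e, Φ⟩, hτ⟩ := Equiv.Perm.mem_sumCongrHom_range_of_perm_mapsTo_inl
    (mapsTo_range_inl_of_sumCongr hψ hψτ.symm hll hlam)
  exact ⟨π, e, Φ, (congrArg (Equiv.sumCongr π) hτ).trans hψτ⟩

end Automorphisms

namespace GameSym

variable {N : Type*} [DecidableEq N] {A : N → Type*} [∀ i, DecidableEq (A i)]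
  [Finite N] [∀ i, Finite (A i)] [∀ i, Nonempty (A i)]
  {u : (i : N) → ((j : N) → A j) → ℝ} {lam lam' : ℝ}

lemma exists_toPerm_eq (hll : lam ≠ lam') (hlam : ∀ i a, u i a ≠ lam)
    (hlam' : ∀ i a, u i a ≠ lam') {ψ : Equiv.Perm (GameVertex N A)}
    (hψ : ∀ v w, gameGraphLabel u lam lam' (ψ v) (ψ w) = gameGraphLabel u lam lam' v w) :
    ∃ s : GameSym N A u, s.toPerm = ψ := by
  obtain ⟨π, e, Φ, rfl⟩ := exists_sumCongr_eq_of_preserves hψ hll hlam hlam'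
  have part : ∀ x : Σ i, A i, (e x).1 = π x.1 := fun x => by
    simpa [gameGraphLabel] using hψ (Sum.inl x.1) (Sum.inr (Sum.inl x))
  have compat : ∀ (a : (j : N) → A j) (i : N), e ⟨i, a i⟩ = ⟨π i, Φ a (π i)⟩ := by
    intro a i
    have hplays : Φ a (e ⟨i, a i⟩).1 = (e ⟨i, a i⟩).2 := by
      simpa [gameGraphLabel] using hψ (Sum.inr (Sum.inl ⟨i, a i⟩)) (Sum.inr (Sum.inr a))
    have hfst := part ⟨i, a i⟩
    generalize e ⟨i, a i⟩ = y at hplays hfst ⊢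
    obtain ⟨j, b⟩ := y
    dsimp only at hplays hfst
    subst hfst hplays
    rfl
  have payoff : ∀ (i : N) (a : (j : N) → A j), u i a = u (π i) (Φ a) := fun i a => by
    simpa [gameGraphLabel, eq_comm] using hψ (Sum.inl i) (Sum.inr (Sum.inr a))
  exact ⟨⟨π, e, Φ, part, compat, payoff⟩, rfl⟩

end GameSym

/-- The map `M` sending a game symmetry `φ` of the finite game `Γ` to the vertex permutation
`ψ` of the associated labeled graph `G` (with `ψ(i) = π(i)` on players, `ψ(a) = φ(a)` on
actions, and `ψ(𝐚) = φ(𝐚)` on profiles) is a bijection between the symmetry group of `Γ` and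
the automorphism group of `G`, provided the labels `lam ≠ lam'` do not occur as payoffs. -/
theorem stmt_8 {N : Type*} [Fintype N] [DecidableEq N]
    {A : N → Type*} [∀ i, Fintype (A i)] [∀ i, DecidableEq (A i)] [∀ i, Nonempty (A i)]
    (u : (i : N) → ((j : N) → A j) → ℝ) (lam lam' : ℝ) (hll : lam ≠ lam')
    (hlam : ∀ i a, u i a ≠ lam) (hlam' : ∀ i a, u i a ≠ lam') :
    ∃ M : GameSym N A u →
        {ψ : Equiv.Perm (GameVertex N A) //
          ∀ v w, gameGraphLabel u lam lam' (ψ v) (ψ w) = gameGraphLabel u lam lam' v w},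
      Function.Bijective M ∧
      ∀ s : GameSym N A u,
        (∀ i : N, (M s).1 (Sum.inl i) = Sum.inl (s.π i)) ∧
        (∀ x : Σ i, A i, (M s).1 (Sum.inr (Sum.inl x)) = Sum.inr (Sum.inl (s.e x))) ∧
        (∀ a : (j : N) → A j, (M s).1 (Sum.inr (Sum.inr a)) = Sum.inr (Sum.inr (s.Φ a))) := by
  refine ⟨fun s => ⟨s.toPerm, s.gameGraphLabel_toPerm lam lam'⟩, ⟨?_, ?_⟩,
    fun s => ⟨fun _ => rfl, fun _ => rfl, fun _ => rfl⟩⟩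
  · exact fun s t h => GameSym.toPerm_injective (congrArg Subtype.val h)
  · rintro ⟨ψ, hψ⟩
    obtain ⟨s, rfl⟩ := GameSym.exists_toPerm_eq hll hlam hlam' hψ
    exact ⟨s, rfl⟩
end

section
/- Let G = (V, E) be a finite simple graph, and let Γ be the two-player game where player 1's action set is V, player 2's is V ∪ {α}, and payoffs (with four distinct values c_1,...,c_4 for player 1 and d_1,...,d_4 for player 2) are: (c_1,d_1) if player 2 plays α; (c_2,d_2) if the players choose distinct non-adjacent vertices; (c_3,d_3) if distinct adjacent vertices; (c_4,d_4) if the same vertex. Then every game symmetry φ of Γ fixes both players, fixes α, satisfies φ|_{A^1}(v) = φ|_{A^2}(v) for all v ∈ V, and φ|_{A^1} is a graph automorphism of G. -/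
/-- Action sets of the two-player game built from a graph on `V`: player `0` has action set
`V`, player `1` has action set `V ∪ {α}` (with `α := none`). -/
abbrev GraphGameActs (V : Type*) : Fin 2 → Type _ := ![V, Option V]

/-- Payoffs of the two-player game built from a graph `G` on `V`: `(c 0, d 0)` if player 2
plays `α = none`; `(c 3, d 3)` if both players choose the same vertex; `(c 2, d 2)` if they
choose distinct adjacent vertices; `(c 1, d 1)` if they choose distinct non-adjacent
vertices. -/
def graphGamePayoff {V : Type*} [DecidableEq V] (G : SimpleGraph V) [DecidableRel G.Adj]
    (c d : Fin 4 → ℝ) : (i : Fin 2) → ((j : Fin 2) → GraphGameActs V j) → ℝ :=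
  fun i a =>
    match (a 1 : Option V) with
    | none => if i = 0 then c 0 else d 0
    | some w =>
        if (show V from a 0) = w then (if i = 0 then c 3 else d 3)
        else if G.Adj (show V from a 0) w then (if i = 0 then c 2 else d 2)
        else (if i = 0 then c 1 else d 1)

theorem Equiv.Perm.fin_two_eq_one_or_eq_swap (σ : Equiv.Perm (Fin 2)) :
    σ = 1 ∨ σ = Equiv.swap 0 1 := by
  revert σ
  decide

namespace GameSym

variable {N : Type*} {A : N → Type*} {u : (i : N) → ((j : N) → A j) → ℝ}
  (s : GameSym N A u)

theorem exists_fiberEquiv {i j : N} (h : s.π i = j) :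
    ∃ ψ : A i ≃ A j, ∀ x, s.e ⟨i, x⟩ = ⟨j, ψ x⟩ := by
  have hfib : ∀ x : Σ k, A k, x.1 = i ↔ (s.e x).1 = j := fun x => by
    rw [s.part, ← h, s.π.injective.eq_iff]
  refine ⟨(Equiv.sigmaSubtype i).symm.trans
    ((s.e.subtypeEquiv hfib).trans (Equiv.sigmaSubtype j)), fun x => ?_⟩
  refine Sigma.ext ((hfib _).1 rfl) ?_
  simp only [Equiv.trans_apply, Equiv.subtypeEquiv_apply, Equiv.sigmaSubtype_apply, heq_eqRec_iff]
  exact HEq.rfl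

theorem Φ_apply_eq_of_forall_e_mk {i j : N} (h : s.π i = j) {ψ : A i → A j}
    (hψ : ∀ x, s.e ⟨i, x⟩ = ⟨j, ψ x⟩) (a : (k : N) → A k) : s.Φ a j = ψ (a i) := by
  subst h
  exact sigma_mk_injective ((s.compat a i).symm.trans (hψ (a i)))

end GameSym

section GraphGame

variable {V : Type*}

def graphGameProfile (v : V) (o : Option V) : (j : Fin 2) → GraphGameActs V j
  | ⟨0, _⟩ => v
  | ⟨1, _⟩ => o

@[simp]
theorem graphGameProfile_zero (v : V) (o : Option V) : graphGameProfile v o 0 = v := rfl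

@[simp]
theorem graphGameProfile_one (v : V) (o : Option V) : graphGameProfile v o 1 = o := rfl

theorem eq_graphGameProfile_iff {a : (j : Fin 2) → GraphGameActs V j} {v : V} {o : Option V} :
    a = graphGameProfile v o ↔ a 0 = v ∧ a 1 = o := by
  refine ⟨fun h => h ▸ ⟨rfl, rfl⟩, fun ⟨h0, h1⟩ => funext fun j => ?_⟩
  match j with
  | ⟨0, _⟩ => exact h0
  | ⟨1, _⟩ => exact h1

variable [DecidableEq V] (G : SimpleGraph V) [DecidableRel G.Adj]

def graphGameOutcome (v : V) : Option V → Fin 4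
  | none => 0
  | some w => if v = w then 3 else if G.Adj v w then 2 else 1

theorem graphGamePayoff_zero_profile (c d : Fin 4 → ℝ) (v : V) (o : Option V) :
    graphGamePayoff G c d 0 (graphGameProfile v o) = c (graphGameOutcome G v o) := by
  cases o with
  | none => rfl
  | some w =>
    simp only [graphGamePayoff, graphGameOutcome, graphGameProfile_zero, graphGameProfile_one,
      if_true]
    split_ifs <;> rfl

theorem graphGamePayoff_one_profile (c d : Fin 4 → ℝ) (v : V) (o : Option V) :
    graphGamePayoff G c d 1 (graphGameProfile v o) = d (graphGameOutcome G v o) := by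
  cases o with
  | none => rfl
  | some w =>
    simp only [graphGamePayoff, graphGameOutcome, graphGameProfile_zero, graphGameProfile_one,
      one_ne_zero, if_false]
    split_ifs <;> rfl

variable {G}

theorem graphGameOutcome_eq_zero_iff {v : V} {o : Option V} :
    graphGameOutcome G v o = 0 ↔ o = none := by
  cases o with
  | none => simp [graphGameOutcome]
  | some w => simp only [graphGameOutcome, reduceCtorEq, iff_false]; split_ifs <;> decide

theorem graphGameOutcome_eq_three_iff {v : V} {o : Option V} :
    graphGameOutcome G v o = 3 ↔ o = some v := by
  cases o with
  | none => simp [graphGameOutcome]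
  | some w => simp only [graphGameOutcome, Option.some.injEq]; split_ifs <;> simp_all [eq_comm]

theorem graphGameOutcome_some_eq_two_iff {v w : V} :
    graphGameOutcome G v (some w) = 2 ↔ G.Adj v w := by
  simp only [graphGameOutcome]
  split_ifs with h <;> simp_all

variable {c d : Fin 4 → ℝ} (s : GameSym (Fin 2) (GraphGameActs V) (graphGamePayoff G c d))

theorem GameSym.graphGame_π_eq_one (hd : Function.Injective d) : s.π = 1 := by
  refine (Equiv.Perm.fin_two_eq_one_or_eq_swap s.π).resolve_right fun hπ => ?_
  have h0 : s.π 0 = 1 := by simp [hπ]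
  have h1 : s.π 1 = 0 := by simp [hπ]
  obtain ⟨ψ₀, hψ₀⟩ : ∃ ψ₀ : V ≃ Option V, ∀ v : V, s.e ⟨0, v⟩ = ⟨1, ψ₀ v⟩ :=
    s.exists_fiberEquiv h0
  obtain ⟨ψ₁, hψ₁⟩ : ∃ ψ₁ : Option V ≃ V, ∀ o : Option V, s.e ⟨1, o⟩ = ⟨0, ψ₁ o⟩ :=
    s.exists_fiberEquiv h1
  have hpayoff : ∀ v o, c (graphGameOutcome G v o) = d (graphGameOutcome G (ψ₁ o) (ψ₀ v)) := by
    intro v o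
    have hΦ : s.Φ (graphGameProfile v o) = graphGameProfile (ψ₁ o) (ψ₀ v) :=
      eq_graphGameProfile_iff.2
        ⟨s.Φ_apply_eq_of_forall_e_mk h1 hψ₁ _, s.Φ_apply_eq_of_forall_e_mk h0 hψ₀ _⟩
    have h := s.payoff 0 (graphGameProfile v o)
    rwa [h0, hΦ, graphGamePayoff_zero_profile, graphGamePayoff_one_profile] at h
  -- player 2 plays `α`; player 1's action is chosen to be sent to `α`, resp. to the vertex `ψ₁ α`
  have hd0 := hpayoff (ψ₀.symm none) none
  have hd3 := hpayoff (ψ₀.symm (some (ψ₁ none))) none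
  simp only [graphGameOutcome, Equiv.apply_symm_apply, if_true] at hd0 hd3
  exact absurd (hd (hd0.symm.trans hd3)) (by decide)

theorem GameSym.graphGameOutcome_eq_of_π_eq_one (hc : Function.Injective c) (hπ : s.π = 1)
    {ψ : V → V} {η : Option V → Option V} (hψ : ∀ v, s.e ⟨0, v⟩ = ⟨0, ψ v⟩)
    (hη : ∀ o, s.e ⟨1, o⟩ = ⟨1, η o⟩) (v : V) (o : Option V) :
    graphGameOutcome G (ψ v) (η o) = graphGameOutcome G v o := by
  have h0 : s.π 0 = 0 := by simp [hπ]
  have h1 : s.π 1 = 1 := by simp [hπ]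
  have hΦ : s.Φ (graphGameProfile v o) = graphGameProfile (ψ v) (η o) :=
    eq_graphGameProfile_iff.2
      ⟨s.Φ_apply_eq_of_forall_e_mk h0 hψ _, s.Φ_apply_eq_of_forall_e_mk h1 hη _⟩
  have h := s.payoff 0 (graphGameProfile v o)
  rw [h0, hΦ, graphGamePayoff_zero_profile, graphGamePayoff_zero_profile] at h
  exact hc h.symm

end GraphGame

/-- Every game symmetry of the two-player game built from a graph `G` fixes both players,
fixes the extra action `α`, acts identically on the two copies of `V`, and its action on `V`
is a graph automorphism of `G`. -/
theorem stmt_10 {V : Type*} [DecidableEq V] (G : SimpleGraph V) [DecidableRel G.Adj]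
    (c d : Fin 4 → ℝ) (hc : Function.Injective c) (hd : Function.Injective d)
    (s : GameSym (Fin 2) (GraphGameActs V) (graphGamePayoff G c d)) :
    s.π = 1 ∧
    s.e ⟨1, (none : Option V)⟩ = ⟨1, (none : Option V)⟩ ∧
    ∃ ψ : V ≃ V,
      (∀ v : V, s.e ⟨0, v⟩ = ⟨0, ψ v⟩) ∧
      (∀ v : V, s.e ⟨1, (some v : Option V)⟩ = ⟨1, (some (ψ v) : Option V)⟩) ∧
      (∀ v w : V, G.Adj (ψ v) (ψ w) ↔ G.Adj v w) := by
  have hπ := s.graphGame_π_eq_one hd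
  obtain ⟨ψ, hψ⟩ : ∃ ψ : V ≃ V, ∀ v : V, s.e ⟨0, v⟩ = ⟨0, ψ v⟩ :=
    s.exists_fiberEquiv (i := 0) (j := 0) (by simp [hπ])
  obtain ⟨η, hη⟩ : ∃ η : Option V ≃ Option V, ∀ o : Option V, s.e ⟨1, o⟩ = ⟨1, η o⟩ :=
    s.exists_fiberEquiv (i := 1) (j := 1) (by simp [hπ])
  have hout := s.graphGameOutcome_eq_of_π_eq_one hc hπ hψ hη
  have hsome : ∀ v, η (some v) = some (ψ v) := fun v =>
    graphGameOutcome_eq_three_iff.1 ((hout v (some v)).trans (graphGameOutcome_eq_three_iff.2 rfl))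
  have hnone : η none = none := by
    cases h : η none with
    | none => rfl
    | some w =>
      simpa [h] using
        graphGameOutcome_eq_zero_iff.1 ((hout w none).trans (graphGameOutcome_eq_zero_iff.2 rfl))
  refine ⟨hπ, by rw [hη, hnone], ψ, hψ, fun v => by rw [hη, hsome], fun v w => ?_⟩
  rw [← graphGameOutcome_some_eq_two_iff, ← hsome, hout, graphGameOutcome_some_eq_two_iff]
end
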